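/- Let H be a Hopf algebra with bijective antipode and let M be an algebra which is a left H-comodule. Suppose π: H → M is a surjective algebra homomorphism such that the action hm := π(h)m makes M a left-left anti-Yetter-Drinfeld module, and suppose π(1^{(-1)}) 1^{(0)} = 1, where m ↦ m^{(-1)} ⊗ m^{(0)} denotes the coaction applied to the unit 1 of M. Then M is stable, i.e., m^{(-1)} m^{(0)} = m for all m ∈ M. -/

import Mathlib

open TensorProduct

namespace HC

variable {k : Type} [Field k]
variable {H : Type} [Ring H] [Algebra k H]
variable {M : Type} [AddCommGroup M] [Module k M]

/-- Coassociativity and counitality of a left coaction. -/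
def IsLCoact (Δ : H →ₗ[k] H ⊗[k] H) (ε : H →ₗ[k] k)
    (coact : M →ₗ[k] H ⊗[k] M) : Prop :=
  ((TensorProduct.map Δ LinearMap.id) ∘ₗ coact =
    ((TensorProduct.assoc k H H M).symm.toLinearMap) ∘ₗ
      (TensorProduct.map LinearMap.id coact) ∘ₗ coact) ∧
  (∀ m : M, (TensorProduct.lid k M) ((TensorProduct.map ε LinearMap.id) (coact m)) = m)

/-- The left-left anti-Yetter-Drinfeld condition. -/
def AYDll (Δ : H →ₗ[k] H ⊗[k] H) (Sinv : H →ₗ[k] H)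
    (act : H →ₗ[k] M →ₗ[k] M) (coact : M →ₗ[k] H ⊗[k] M) : Prop :=
  ∀ (h : H) (m : M) (s : Finset ℕ) (a b : ℕ → H)
    (t : ℕ → Finset ℕ) (c d : ℕ → ℕ → H)
    (u : Finset ℕ) (e : ℕ → H) (m0 : ℕ → M),
    Δ h = ∑ i ∈ s, a i ⊗ₜ b i →
    (∀ i ∈ s, Δ (b i) = ∑ j ∈ t i, c i j ⊗ₜ d i j) →
    coact m = ∑ l ∈ u, e l ⊗ₜ m0 l →
    coact (act h m) = ∑ i ∈ s, ∑ j ∈ t i, ∑ l ∈ u,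
      (a i * e l * Sinv (d i j)) ⊗ₜ act (c i j) (m0 l)

/-- Stability: `action ∘ coaction = id`, i.e. `m⁽⁻¹⁾ m⁽⁰⁾ = m`. -/
def StableL (act : H →ₗ[k] M →ₗ[k] M) (coact : M →ₗ[k] H ⊗[k] M) : Prop :=
  ∀ (m : M) (u : Finset ℕ) (e : ℕ → H) (m0 : ℕ → M),
    coact m = ∑ l ∈ u, e l ⊗ₜ m0 l →
    ∑ l ∈ u, act (e l) (m0 l) = m

end HC

open HC TensorProduct

/-!
Write `m = π g`. Applying the anti-Yetter–Drinfeld condition to `g · 1` gives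
`m⁽⁻¹⁾ m⁽⁰⁾ = ∑ π (g⁽¹⁾ 1⁽⁻¹⁾ S⁻¹(g⁽³⁾) g⁽²⁾) 1⁽⁰⁾`. Since `S` is injective and
antimultiplicative, `S⁻¹(x⁽²⁾) x⁽¹⁾ = ε(x) 1`, so the sum collapses to
`π g · π(1⁽⁻¹⁾) 1⁽⁰⁾ = π g`.
-/

open Coalgebra HopfAlgebra

theorem TensorProduct.exists_sum_range_tmul {R M N : Type*} [CommSemiring R]
    [AddCommMonoid M] [AddCommMonoid N] [Module R M] [Module R N] (x : M ⊗[R] N) :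
    ∃ (n : ℕ) (e : ℕ → M) (f : ℕ → N), x = ∑ l ∈ Finset.range n, e l ⊗ₜ f l := by
  induction x with
  | zero => exact ⟨0, 0, 0, by simp⟩
  | tmul m n => exact ⟨1, fun _ => m, fun _ => n, by simp⟩
  | add x y hx hy =>
    obtain ⟨n, e, f, rfl⟩ := hx
    obtain ⟨n', e', f', rfl⟩ := hy
    refine ⟨n + n', fun l => if l < n then e l else e' (l - n),
      fun l => if l < n then f l else f' (l - n), ?_⟩
    rw [Finset.sum_range_add]
    congr 1
    · exact Finset.sum_congr rfl fun l hl => by simp [Finset.mem_range.mp hl]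
    · exact Finset.sum_congr rfl fun l _ => by simp

theorem Coalgebra.sum_counit_right_smul {R A ι : Type*} [CommSemiring R] [AddCommMonoid A]
    [Module R A] [Coalgebra R A] {a : A} (𝓡 : Repr R a ι) :
    ∑ i ∈ 𝓡.index, counit (R := R) (𝓡.right i) • 𝓡.left i = a := by
  simpa only [map_sum, _root_.TensorProduct.rid_tmul, one_smul] using
    congr_arg (_root_.TensorProduct.rid R A) (sum_tmul_counit_eq 𝓡)

section HopfAlgebra

variable {R A : Type*} [CommSemiring R] [Semiring A] [HopfAlgebra R A] {ι κ : Type*}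

theorem HopfAlgebra.sum_antipode_inv_right_mul_eq_smul (Sinv : A →ₗ[R] A)
    (hinj : Function.Injective (antipode R (A := A)))
    (hSinv : Function.RightInverse Sinv (antipode R)) {a : A} (𝓡 : Repr R a ι) :
    ∑ i ∈ 𝓡.index, Sinv (𝓡.right i) * 𝓡.left i = counit (R := R) a • 1 := by
  apply hinj
  simp only [map_sum, map_smul, antipode_one, antipode_mul_antidistrib, hSinv _]
  exact sum_antipode_mul_eq_smul 𝓡

theorem HopfAlgebra.sum_mul_mul_antipode_inv_mul (Sinv : A →ₗ[R] A)
    (hinj : Function.Injective (antipode R (A := A)))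
    (hSinv : Function.RightInverse Sinv (antipode R)) {g : A} (y : A)
    {s : Finset ι} {a b : ι → A} {t : ι → Finset κ} {c d : ι → κ → A}
    (hg : comul g = ∑ i ∈ s, a i ⊗ₜ[R] b i)
    (hb : ∀ i ∈ s, comul (b i) = ∑ j ∈ t i, c i j ⊗ₜ[R] d i j) :
    ∑ i ∈ s, ∑ j ∈ t i, a i * y * Sinv (d i j) * c i j = g * y := by
  calc ∑ i ∈ s, ∑ j ∈ t i, a i * y * Sinv (d i j) * c i j
      = ∑ i ∈ s, a i * y * ∑ j ∈ t i, Sinv (d i j) * c i j := by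
        simp only [Finset.mul_sum, mul_assoc]
    _ = ∑ i ∈ s, a i * y * (counit (R := R) (b i) • 1) := by
        refine Finset.sum_congr rfl fun i hi => ?_
        rw [sum_antipode_inv_right_mul_eq_smul Sinv hinj hSinv ⟨t i, c i, d i, (hb i hi).symm⟩]
    _ = (∑ i ∈ s, counit (R := R) (b i) • a i) * y := by
        simp only [mul_smul_one, Finset.sum_mul, smul_mul_assoc]
    _ = g * y := by rw [sum_counit_right_smul ⟨s, a, b, hg.symm⟩]

end HopfAlgebra

theorem HC.stableL_iff {k H M : Type} [Field k] [Ring H] [Algebra k H] [AddCommGroup M]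
    [Module k M] (act : H →ₗ[k] M →ₗ[k] M) (coact : M →ₗ[k] H ⊗[k] M) :
    StableL act coact ↔ ∀ m, lift act (coact m) = m := by
  refine ⟨fun h m => ?_, fun h m u e m0 hm => ?_⟩
  · obtain ⟨n, e, m0, hm⟩ := exists_sum_range_tmul (coact m)
    conv_rhs => rw [← h m _ e m0 hm]
    rw [hm, map_sum]
    simp only [lift.tmul]
  · rw [← h m, hm, map_sum]
    simp only [lift.tmul]

theorem stmt6_general {k : Type} [Field k] {H : Type} [Ring H] [HopfAlgebra k H]
    (Sinv : H →ₗ[k] H)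
    (hS : ∀ h : H, Sinv (HopfAlgebra.antipode (R := k) h) = h)
    (hS' : ∀ h : H, HopfAlgebra.antipode (R := k) (Sinv h) = h)
    {M : Type} [Ring M] [Algebra k M]
    (π : H →ₐ[k] M) (hsurj : Function.Surjective π)
    (coact : M →ₗ[k] H ⊗[k] M)
    (hAYD : AYDll (Coalgebra.comul (R := k)) Sinv
      ((LinearMap.mul k M) ∘ₗ π.toLinearMap) coact)
    (hone : ∀ (u : Finset ℕ) (e : ℕ → H) (m0 : ℕ → M),
      coact 1 = ∑ l ∈ u, e l ⊗ₜ m0 l → ∑ l ∈ u, π (e l) * m0 l = 1) :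
    StableL ((LinearMap.mul k M) ∘ₗ π.toLinearMap) coact := by
  rw [stableL_iff]
  intro m
  obtain ⟨g, rfl⟩ := hsurj m
  obtain ⟨n, a, b, hg⟩ := exists_sum_range_tmul (comul (R := k) g)
  choose t c d hb using fun i => exists_sum_range_tmul (comul (R := k) (b i))
  obtain ⟨n₁, e, m₁, h₁⟩ := exists_sum_range_tmul (coact 1)
  have hπg := hAYD g 1 _ a b _ c d _ e m₁ hg (fun i _ => hb i) h₁
  rw [show ((LinearMap.mul k M) ∘ₗ π.toLinearMap) g 1 = π g from mul_one (π g)] at hπg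
  have collapse (l : ℕ) : ∑ i ∈ Finset.range n, ∑ j ∈ Finset.range (t i),
      π (a i * e l * Sinv (d i j)) * (π (c i j) * m₁ l) = π g * π (e l) * m₁ l := by
    rw [← map_mul, ← sum_mul_mul_antipode_inv_mul Sinv (Function.LeftInverse.injective hS) hS'
      (e l) hg fun i _ => hb i]
    simp only [map_sum, Finset.sum_mul, map_mul, mul_assoc]
  rw [hπg]
  simp only [map_sum, lift.tmul, LinearMap.comp_apply, AlgHom.toLinearMap_apply,
    LinearMap.mul_apply']
  calc _ = ∑ l ∈ Finset.range n₁, π g * π (e l) * m₁ l := by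
        rw [Finset.sum_congr rfl fun i _ => Finset.sum_comm, Finset.sum_comm]
        exact Finset.sum_congr rfl fun l _ => collapse l
    _ = π g * ∑ l ∈ Finset.range n₁, π (e l) * m₁ l := by simp only [Finset.mul_sum, mul_assoc]
    _ = π g := by rw [hone _ _ _ h₁, mul_one]

/-- Let `M` be an algebra and a left `H`-comodule, and let
`π : H → M` be a surjective algebra homomorphism such that the action
`h · m := π(h) m` makes `M` a left-left anti-Yetter-Drinfeld module.  If
moreover `π(1⁽⁻¹⁾) 1⁽⁰⁾ = 1`, then `M` is stable. -/
theorem stmt6 {k : Type} [Field k] {H : Type} [Ring H] [HopfAlgebra k H]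
    (Sinv : H →ₗ[k] H)
    (hS : ∀ h : H, Sinv (HopfAlgebra.antipode (R := k) h) = h)
    (hS' : ∀ h : H, HopfAlgebra.antipode (R := k) (Sinv h) = h)
    {M : Type} [Ring M] [Algebra k M]
    (π : H →ₐ[k] M) (hsurj : Function.Surjective π)
    (coact : M →ₗ[k] H ⊗[k] M)
    (hcoact : IsLCoact (Coalgebra.comul (R := k)) (Coalgebra.counit (R := k)) coact)
    (hAYD : AYDll (Coalgebra.comul (R := k)) Sinv
      ((LinearMap.mul k M) ∘ₗ π.toLinearMap) coact)
    (hone : ∀ (u : Finset ℕ) (e : ℕ → H) (m0 : ℕ → M),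
      coact 1 = ∑ l ∈ u, e l ⊗ₜ m0 l → ∑ l ∈ u, π (e l) * m0 l = 1) :
    StableL ((LinearMap.mul k M) ∘ₗ π.toLinearMap) coact :=
  stmt6_general Sinv hS hS' π hsurj coact hAYD hone
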